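/- arXiv:1904.09683 — 2 statements merged into one kernel-verified Lean document; each statement's English description precedes it below -/
import Mathlib

section
/- Let t₀ < T and I = [t₀, T]. Let P be a real polynomial with P(0) = 0, let d₁, d₂ > 0, let ρ : ℝ → ℝ be continuously differentiable on I, let μ : ℝ → ℝ be twice continuously differentiable with μ(t) > 0 on I, and let J₁₁, J₁₂, J₂₁, J₂₂ : ℝ → ℝ be continuously differentiable on I with J₁₂(t) ≠ 0 on I. Write det J = J₁₁J₂₂ - J₁₂J₂₁ and tr J = J₁₁ + J₂₂. Suppose that for all t ∈ I: det J(t) + (d₂J₁₁(t) + d₁J₂₂(t))·P(-ρ(t)) + d₁d₂·P(-ρ(t))² < -μ''(t)/μ(t) + (μ'(t)/μ(t))·[(d₁+d₂)·P(-ρ(t)) + tr J(t) + J₁₂'(t)/J₁₂(t)] + J₁₂(t)·(d/dt)((d₁·P(-ρ(t)) + J₁₁(t))/J₁₂(t)). Then any differentiable pair V₁, V₂ : ℝ → ℝ satisfying V₁' = d₁·P(-ρ(t))·V₁ + J₁₁(t)V₁ + J₁₂(t)V₂ and V₂' = d₂·P(-ρ(t))·V₂ + J₂₁(t)V₁ +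 J₂₂(t)V₂ on I, with V₁(t₀) = μ(t₀) and d₁·P(-ρ(t₀))·μ(t₀) + J₁₁(t₀)μ(t₀) + J₁₂(t₀)V₂(t₀) = μ'(t₀), satisfies V₁(t) ≥ μ(t) for all t ∈ I. -/
/-!
Eliminating `V₂` turns the system `V' = M(t) V`, `M = D·P(-ρ) + J`, into the second-order
equation `V₁'' = k V₁' + (J₁₂ (M₁₁/J₁₂)' - det M) V₁` with `k = tr M + J₁₂'/J₁₂`, and the
hypothesis says exactly that `μ` is a strict subsolution of it with the same initial data as `V₁`.
Hence the Wronskian `w = V₁' μ - V₁ μ'` vanishes at `t₀` and satisfies `w' > k w` wherever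
`V₁ > 0`, while `(V₁/μ)' = w/μ²`. So as long as `w ≥ 0` we have `V₁ ≥ μ > 0`, which keeps `w`
from turning negative at its first zero; a continuity argument closes the loop.
-/

open Set Filter Topology

theorem nonneg_of_rightDeriv_pos_at_first_zero {w w' : ℝ → ℝ} {a b : ℝ}
    (hw : ContinuousOn w (Icc a b))
    (hw' : ∀ t ∈ Ico a b, HasDerivWithinAt w (w' t) (Ici t) t) (ha : 0 ≤ w a)
    (hpos : ∀ t ∈ Ico a b, (∀ s ∈ Icc a t, 0 ≤ w s) → w t = 0 → 0 < w' t) :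
    ∀ t ∈ Icc a b, 0 ≤ w t := by
  have hclosed : IsClosed ({t | 0 ≤ w t} ∩ Icc a b) := by
    rw [inter_comm]
    exact hw.preimage_isClosed_of_isClosed isClosed_Icc isClosed_Ici
  refine fun t ht ↦ hclosed.Icc_subset_of_forall_mem_nhdsGT_of_Icc_subset ha
    (fun t ht hsub ↦ ?_) ht
  rcases (show 0 ≤ w t from hsub ⟨ht.1, le_rfl⟩).eq_or_lt with hzero | hwt
  · have hslope : Tendsto (slope w t) (𝓝[>] t) (𝓝 (w' t)) :=
      (hasDerivWithinAt_iff_tendsto_slope' (lt_irrefl t)).mp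
        (hasDerivWithinAt_Ioi_iff_Ici.mpr (hw' t ht))
    filter_upwards [hslope.eventually_const_lt (hpos t ht (fun s hs ↦ hsub hs) hzero.symm),
      self_mem_nhdsWithin] with x hx htx
    exact (pos_of_slope_pos htx hx hzero.symm).le
  · exact nhdsWithin_mono t Ioi_subset_Ici_self
      ((hw' t ht).continuousWithinAt.eventually_const_lt hwt |>.mono fun _ ↦ le_of_lt)

theorem le_of_wronskian_nonneg {u v u' v' : ℝ → ℝ} {a b : ℝ}
    (hu : ∀ t ∈ Icc a b, HasDerivAt u (u' t) t) (hv : ∀ t ∈ Icc a b, HasDerivAt v (v' t) t)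
    (hv_pos : ∀ t ∈ Icc a b, 0 < v t) (ha : v a ≤ u a)
    (hw : ∀ t ∈ Icc a b, 0 ≤ u' t * v t - u t * v' t) :
    ∀ t ∈ Icc a b, v t ≤ u t := by
  intro t ht
  have hratio : ∀ s ∈ Icc a b, HasDerivAt (u / v) ((u' s * v s - u s * v' s) / v s ^ 2) s :=
    fun s hs ↦ (hu s hs).div (hv s hs) (hv_pos s hs).ne'
  have hmono : MonotoneOn (u / v) (Icc a b) :=
    monotoneOn_of_hasDerivWithinAt_nonneg (convex_Icc a b)
      (fun s hs ↦ (hratio s hs).continuousAt.continuousWithinAt)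
      (fun s hs ↦ (hratio s (interior_subset hs)).hasDerivWithinAt)
      (fun s hs ↦ div_nonneg (hw s (interior_subset hs)) (sq_nonneg _))
  have hat : a ∈ Icc a b := ⟨le_rfl, ht.1.trans ht.2⟩
  have h := hmono hat ht ht.1
  simp only [Pi.div_apply] at h
  rw [← one_le_div (hv_pos t ht)]
  exact ((one_le_div (hv_pos a hat)).mpr ha).trans h

theorem le_fst_of_linear_system {a b : ℝ} {m₁₁ m₁₂ m₂₁ m₂₂ μ V₁ V₂ : ℝ → ℝ}
    (hm₁₁ : ∀ t ∈ Icc a b, DifferentiableAt ℝ m₁₁ t)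
    (hm₁₂ : ∀ t ∈ Icc a b, DifferentiableAt ℝ m₁₂ t) (hm₁₂_ne : ∀ t ∈ Icc a b, m₁₂ t ≠ 0)
    (hμ : ∀ t ∈ Icc a b, DifferentiableAt ℝ μ t)
    (hμ' : ∀ t ∈ Icc a b, DifferentiableAt ℝ (deriv μ) t) (hμ_pos : ∀ t ∈ Icc a b, 0 < μ t)
    (hineq : ∀ t ∈ Icc a b, m₁₁ t * m₂₂ t - m₁₂ t * m₂₁ t
      < -deriv (deriv μ) t / μ t + deriv μ t / μ t * (m₁₁ t + m₂₂ t + deriv m₁₂ t / m₁₂ t)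
        + m₁₂ t * deriv (fun s ↦ m₁₁ s / m₁₂ s) t)
    (hV₁ : ∀ t ∈ Icc a b, HasDerivAt V₁ (m₁₁ t * V₁ t + m₁₂ t * V₂ t) t)
    (hV₂ : ∀ t ∈ Icc a b, HasDerivAt V₂ (m₂₁ t * V₁ t + m₂₂ t * V₂ t) t)
    (h₀ : V₁ a = μ a) (h₀' : m₁₁ a * V₁ a + m₁₂ a * V₂ a = deriv μ a) :
    ∀ t ∈ Icc a b, μ t ≤ V₁ t := by
  set p : ℝ → ℝ := fun t ↦ m₁₁ t * V₁ t + m₁₂ t * V₂ t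
  set w : ℝ → ℝ := fun t ↦ p t * μ t - V₁ t * deriv μ t
  set w' : ℝ → ℝ := fun t ↦
    (deriv m₁₁ t * V₁ t + m₁₁ t * p t
        + (deriv m₁₂ t * V₂ t + m₁₂ t * (m₂₁ t * V₁ t + m₂₂ t * V₂ t))) * μ t
      + p t * deriv μ t - (p t * deriv μ t + V₁ t * deriv (deriv μ) t)
  have hw : ∀ t ∈ Icc a b, HasDerivAt w (w' t) t := fun t ht ↦
    (((((hm₁₁ t ht).hasDerivAt.mul (hV₁ t ht)).add ((hm₁₂ t ht).hasDerivAt.mul (hV₂ t ht))).mul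
      (hμ t ht).hasDerivAt).sub ((hV₁ t ht).mul (hμ' t ht).hasDerivAt))
  have hgrowth : ∀ t ∈ Icc a b, 0 < V₁ t →
      (m₁₁ t + m₂₂ t + deriv m₁₂ t / m₁₂ t) * w t < w' t := by
    intro t ht hV
    have hμt := hμ_pos t ht
    have hgap := mul_pos (mul_pos hV hμt) (sub_pos.mpr (hineq t ht))
    rw [((hm₁₁ t ht).hasDerivAt.fun_div (hm₁₂ t ht).hasDerivAt (hm₁₂_ne t ht)).deriv] at hgap
    have hid : w' t - (m₁₁ t + m₂₂ t + deriv m₁₂ t / m₁₂ t) * w t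
        = V₁ t * μ t * (-deriv (deriv μ) t / μ t
            + deriv μ t / μ t * (m₁₁ t + m₂₂ t + deriv m₁₂ t / m₁₂ t)
            + m₁₂ t * ((deriv m₁₁ t * m₁₂ t - m₁₁ t * deriv m₁₂ t) / m₁₂ t ^ 2)
            - (m₁₁ t * m₂₂ t - m₁₂ t * m₂₁ t)) := by
      have hm₁₂t := hm₁₂_ne t ht
      simp only [w, w', p]
      field_simp
      ring
    linarith
  have hcompare : ∀ c ∈ Icc a b, (∀ s ∈ Icc a c, 0 ≤ w s) → ∀ s ∈ Icc a c, μ s ≤ V₁ s :=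
    fun c hc hwc ↦
      have hsub : Icc a c ⊆ Icc a b := Icc_subset_Icc_right hc.2
      le_of_wronskian_nonneg (fun s hs ↦ hV₁ s (hsub hs)) (fun s hs ↦ (hμ s (hsub hs)).hasDerivAt)
        (fun s hs ↦ hμ_pos s (hsub hs)) h₀.ge hwc
  have hw₀ : w a = 0 := by
    simp only [w, p]
    rw [← h₀', h₀]
    ring
  have hw_nonneg : ∀ t ∈ Icc a b, 0 ≤ w t := by
    refine nonneg_of_rightDeriv_pos_at_first_zero
      (fun t ht ↦ (hw t ht).continuousAt.continuousWithinAt)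
      (fun t ht ↦ (hw t (Ico_subset_Icc_self ht)).hasDerivWithinAt)
      hw₀.ge fun t ht hwt hzero ↦ ?_
    have ht' := Ico_subset_Icc_self ht
    have hV := (hμ_pos t ht').trans_le (hcompare t ht' hwt t ⟨ht.1, le_rfl⟩)
    simpa [hzero] using hgrowth t ht' hV
  exact le_of_wronskian_nonneg hV₁ (fun t ht ↦ (hμ t ht).hasDerivAt) hμ_pos h₀.ge hw_nonneg

theorem higher_order_instability_J12_branch_general
    (t₀ T : ℝ)
    (P : Polynomial ℝ)
    (d₁ d₂ : ℝ)
    (ρ μ J₁₁ J₁₂ J₂₁ J₂₂ V₁ V₂ : ℝ → ℝ)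
    (hρd : ∀ t ∈ Icc t₀ T, DifferentiableAt ℝ ρ t)
    (hμ : ContDiff ℝ 2 μ)
    (hμpos : ∀ t ∈ Icc t₀ T, 0 < μ t)
    (hJ₁₁d : ∀ t ∈ Icc t₀ T, DifferentiableAt ℝ J₁₁ t)
    (hJ₁₂d : ∀ t ∈ Icc t₀ T, DifferentiableAt ℝ J₁₂ t)
    (hJ₁₂ne : ∀ t ∈ Icc t₀ T, J₁₂ t ≠ 0)
    (hineq : ∀ t ∈ Icc t₀ T,
      J₁₁ t * J₂₂ t - J₁₂ t * J₂₁ t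
          + (d₂ * J₁₁ t + d₁ * J₂₂ t) * P.eval (-ρ t)
          + d₁ * d₂ * (P.eval (-ρ t)) ^ 2
        < -(deriv (deriv μ) t) / μ t
          + (deriv μ t / μ t)
            * ((d₁ + d₂) * P.eval (-ρ t) + (J₁₁ t + J₂₂ t) + deriv J₁₂ t / J₁₂ t)
          + J₁₂ t * deriv (fun s => (d₁ * P.eval (-ρ s) + J₁₁ s) / J₁₂ s) t)
    (hV₁d : ∀ t ∈ Icc t₀ T, DifferentiableAt ℝ V₁ t)
    (hV₂d : ∀ t ∈ Icc t₀ T, DifferentiableAt ℝ V₂ t)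
    (hODE₁ : ∀ t ∈ Icc t₀ T,
      deriv V₁ t = d₁ * P.eval (-ρ t) * V₁ t + J₁₁ t * V₁ t + J₁₂ t * V₂ t)
    (hODE₂ : ∀ t ∈ Icc t₀ T,
      deriv V₂ t = d₂ * P.eval (-ρ t) * V₂ t + J₂₁ t * V₁ t + J₂₂ t * V₂ t)
    (hic : V₁ t₀ = μ t₀)
    (hic' : d₁ * P.eval (-ρ t₀) * μ t₀ + J₁₁ t₀ * μ t₀ + J₁₂ t₀ * V₂ t₀ = deriv μ t₀) :
    ∀ t ∈ Icc t₀ T, μ t ≤ V₁ t := by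
  have hμ' : Differentiable ℝ (deriv μ) :=
    (contDiff_succ_iff_deriv.mp (hμ : ContDiff ℝ (1 + 1) μ)).2.2.differentiable one_ne_zero
  refine le_fst_of_linear_system (m₁₁ := fun s ↦ d₁ * P.eval (-ρ s) + J₁₁ s) (m₁₂ := J₁₂)
    (m₂₁ := J₂₁) (m₂₂ := fun s ↦ d₂ * P.eval (-ρ s) + J₂₂ s) (V₂ := V₂)
    (fun t ht ↦ (((P.differentiableAt).comp t (hρd t ht).neg).const_mul d₁).add (hJ₁₁d t ht))
    hJ₁₂d hJ₁₂ne (fun t _ ↦ hμ.differentiable two_ne_zero t) (fun t _ ↦ hμ' t) hμpos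
    (fun t ht ↦ ?_) (fun t ht ↦ ?_) (fun t ht ↦ ?_) hic (by rw [hic, ← hic']; ring)
  · linarith [hineq t ht]
  · exact (hV₁d t ht).hasDerivAt.congr_deriv (by rw [hODE₁ t ht]; ring)
  · exact (hV₂d t ht).hasDerivAt.congr_deriv (by rw [hODE₂ t ht]; ring)

/-- Theorem 4, first branch: instability condition for two-species
pattern-forming systems with higher-order spatial operator `D·P(∇²)` (with `P`
a polynomial, `P(0) = 0`) on an evolving domain; the component `V₁` of the
linearized perturbation grows at least as fast as the volume factor `μ`. -/
theorem higher_order_instability_J12_branch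
    (t₀ T : ℝ) (ht : t₀ < T)
    (P : Polynomial ℝ) (hP : P.eval 0 = 0)
    (d₁ d₂ : ℝ) (hd₁ : 0 < d₁) (hd₂ : 0 < d₂)
    (ρ μ J₁₁ J₁₂ J₂₁ J₂₂ V₁ V₂ : ℝ → ℝ)
    (hρd : ∀ t ∈ Icc t₀ T, DifferentiableAt ℝ ρ t)
    (hρc : ContinuousOn (deriv ρ) (Icc t₀ T))
    (hμ : ContDiff ℝ 2 μ)
    (hμpos : ∀ t ∈ Icc t₀ T, 0 < μ t)
    (hJ₁₁d : ∀ t ∈ Icc t₀ T, DifferentiableAt ℝ J₁₁ t)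
    (hJ₁₁c : ContinuousOn (deriv J₁₁) (Icc t₀ T))
    (hJ₁₂d : ∀ t ∈ Icc t₀ T, DifferentiableAt ℝ J₁₂ t)
    (hJ₁₂c : ContinuousOn (deriv J₁₂) (Icc t₀ T))
    (hJ₂₁d : ∀ t ∈ Icc t₀ T, DifferentiableAt ℝ J₂₁ t)
    (hJ₂₁c : ContinuousOn (deriv J₂₁) (Icc t₀ T))
    (hJ₂₂d : ∀ t ∈ Icc t₀ T, DifferentiableAt ℝ J₂₂ t)
    (hJ₂₂c : ContinuousOn (deriv J₂₂) (Icc t₀ T))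
    (hJ₁₂ne : ∀ t ∈ Icc t₀ T, J₁₂ t ≠ 0)
    (hineq : ∀ t ∈ Icc t₀ T,
      J₁₁ t * J₂₂ t - J₁₂ t * J₂₁ t
          + (d₂ * J₁₁ t + d₁ * J₂₂ t) * P.eval (-ρ t)
          + d₁ * d₂ * (P.eval (-ρ t)) ^ 2
        < -(deriv (deriv μ) t) / μ t
          + (deriv μ t / μ t)
            * ((d₁ + d₂) * P.eval (-ρ t) + (J₁₁ t + J₂₂ t) + deriv J₁₂ t / J₁₂ t)
          + J₁₂ t * deriv (fun s => (d₁ * P.eval (-ρ s) + J₁₁ s) / J₁₂ s) t)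
    (hV₁d : ∀ t ∈ Icc t₀ T, DifferentiableAt ℝ V₁ t)
    (hV₂d : ∀ t ∈ Icc t₀ T, DifferentiableAt ℝ V₂ t)
    (hODE₁ : ∀ t ∈ Icc t₀ T,
      deriv V₁ t = d₁ * P.eval (-ρ t) * V₁ t + J₁₁ t * V₁ t + J₁₂ t * V₂ t)
    (hODE₂ : ∀ t ∈ Icc t₀ T,
      deriv V₂ t = d₂ * P.eval (-ρ t) * V₂ t + J₂₁ t * V₁ t + J₂₂ t * V₂ t)
    (hic : V₁ t₀ = μ t₀)
    (hic' : d₁ * P.eval (-ρ t₀) * μ t₀ + J₁₁ t₀ * μ t₀ + J₁₂ t₀ * V₂ t₀ = deriv μ t₀) :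
    ∀ t ∈ Icc t₀ T, μ t ≤ V₁ t :=
  higher_order_instability_J12_branch_general t₀ T P d₁ d₂ ρ μ J₁₁ J₁₂ J₂₁ J₂₂ V₁ V₂ hρd hμ hμpos
    hJ₁₁d hJ₁₂d hJ₁₂ne hineq hV₁d hV₂d hODE₁ hODE₂ hic hic'
end

section
/- Let t₀ < T and I = [t₀, T]. Let d₁, d₂ > 0, let k be a positive integer, let r : ℝ → ℝ be twice continuously differentiable with r(t) > 0 on I, and let J₁₁, J₁₂, J₂₁, J₂₂ : ℝ → ℝ be continuously differentiable on I with J₁₂(t) ≠ 0 on I. Write det J = J₁₁J₂₂ - J₁₂J₂₁, tr J = J₁₁ + J₂₂, and ρ(t) = π²k²/r(t)². Suppose that for all t ∈ I: det J(t) - (d₂J₁₁(t) + d₁J₂₂(t))·π²k²/r(t)² + d₁d₂·π⁴k⁴/r(t)⁴ < -r''(t)/r(t) - (r'(t)/r(t))·[(d₁+d₂)·π²k²/r(t)² - tr J(t) - J₁₂'(t)/J₁₂(t)] - J₁₂(t)·(d/dt)((d₁π²k²/r(t)² - J₁₁(t))/J₁₂(t)). Then any differentiable pair V₁, V₂ :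 ℝ → ℝ satisfying V₁' = -d₁ρ(t)V₁ + J₁₁(t)V₁ + J₁₂(t)V₂ and V₂' = -d₂ρ(t)V₂ + J₂₁(t)V₁ + J₂₂(t)V₂ on I, with V₁(t₀) = r(t₀) and -d₁ρ(t₀)r(t₀) + J₁₁(t₀)r(t₀) + J₁₂(t₀)V₂(t₀) = r'(t₀), satisfies V₁(t) ≥ r(t) for all t ∈ I. -/
/-!
Put `W = r V₁' - r' V₁`, so that `(V₁ / r)' = W / r²`. For the linear system
`V₁' = a V₁ + b V₂`, `V₂' = c V₁ + d V₂` one computes `W' = (a + d + b'/b) W + K V₁`, where `K` is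
`r` times the gap in the instability inequality, hence `K > 0`; the initial conditions give
`W(t₀) = 0`. As long as `W ≥ 0`, `V₁ / r` is nondecreasing, so `V₁ ≥ r > 0`, and then at a zero
of `W` its derivative `K V₁` is positive. So `W` can never become negative, and `V₁ ≥ r`
throughout.
-/

open Set Real Filter Topology

theorem HasDerivWithinAt.eventually_nhdsGT_pos {f : ℝ → ℝ} {f' x : ℝ}
    (hf : HasDerivWithinAt f f' (Ici x) x) (hx : f x = 0) (hf' : 0 < f') :
    ∀ᶠ u in 𝓝[>] x, 0 < f u := by
  have hslope := (hasDerivWithinAt_iff_tendsto_slope' (lt_irrefl x)).1 hf.Ioi_of_Ici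
  filter_upwards [hslope.eventually (eventually_gt_nhds hf'), self_mem_nhdsWithin] with u hu hxu
  simpa [hx] using (slope_pos_iff_of_le (le_of_lt hxu)).1 hu

theorem ContinuousOn.isClosed_setOf_forall_Icc_nonneg_inter_Icc {f : ℝ → ℝ} {a b : ℝ}
    (hf : ContinuousOn f (Icc a b)) :
    IsClosed ({x | ∀ u ∈ Icc a x, 0 ≤ f u} ∩ Icc a b) := by
  refine isClosed_of_closure_subset fun x hx => ?_
  have hC : IsClosed (Icc a b ∩ f ⁻¹' Ici 0) :=
    hf.preimage_isClosed_of_isClosed isClosed_Icc isClosed_Ici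
  have hsub : {x | ∀ u ∈ Icc a x, 0 ≤ f u} ∩ Icc a b ⊆ Icc a b ∩ f ⁻¹' Ici 0 :=
    fun y hy => ⟨hy.2, hy.1 y ⟨hy.2.1, le_rfl⟩⟩
  have hxC : x ∈ Icc a b ∩ f ⁻¹' Ici 0 := closure_minimal hsub hC hx
  refine ⟨fun u hu => ?_, hxC.1⟩
  rcases hu.2.eq_or_lt with rfl | hux
  · exact hxC.2
  · obtain ⟨y, huy, hy⟩ := mem_closure_iff_nhds.1 hx (Ioi u) (Ioi_mem_nhds hux)
    exact hy.1 u ⟨hu.1, le_of_lt huy⟩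

theorem nonneg_of_hasDerivWithinAt_pos_of_eq_zero {f f' : ℝ → ℝ} {a b : ℝ}
    (hf : ContinuousOn f (Icc a b)) (hf' : ∀ x ∈ Ico a b, HasDerivWithinAt f (f' x) (Ici x) x)
    (ha : 0 ≤ f a) (hpos : ∀ x ∈ Ico a b, (∀ u ∈ Icc a x, 0 ≤ f u) → f x = 0 → 0 < f' x) :
    ∀ x ∈ Icc a b, 0 ≤ f x := by
  set s := {x | ∀ u ∈ Icc a x, 0 ≤ f u}
  have hgt : ∀ x ∈ s ∩ Ico a b, s ∈ 𝓝[>] x := by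
    rintro x ⟨hxs, hx⟩
    have hev : ∀ᶠ u in 𝓝[>] x, 0 < f u := by
      rcases (hxs x ⟨hx.1, le_rfl⟩).eq_or_lt with h | h
      · exact (hf' x hx).eventually_nhdsGT_pos h.symm (hpos x hx hxs h.symm)
      · exact ((hf' x hx).continuousWithinAt.eventually (lt_mem_nhds h)).filter_mono
          (nhdsWithin_mono _ Ioi_subset_Ici_self)
    obtain ⟨c, hxc, hc⟩ := mem_nhdsGT_iff_exists_Ioc_subset.1 hev
    filter_upwards [Ioo_mem_nhdsGT hxc] with y hy u hu
    rcases le_or_gt u x with hux | hxu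
    · exact hxs u ⟨hu.1, hux⟩
    · exact (hc ⟨hxu, hu.2.trans hy.2.le⟩).le
  have has : a ∈ s := fun u hu => le_antisymm hu.2 hu.1 ▸ ha
  intro x hx
  exact hf.isClosed_setOf_forall_Icc_nonneg_inter_Icc.Icc_subset_of_forall_mem_nhdsWithin has hgt
    hx x ⟨hx.1, le_rfl⟩

theorem le_of_wronskian_nonneg_s16 {r V : ℝ → ℝ} {a b : ℝ}
    (hr : ∀ u ∈ Icc a b, DifferentiableAt ℝ r u) (hV : ∀ u ∈ Icc a b, DifferentiableAt ℝ V u)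
    (hrpos : ∀ u ∈ Icc a b, 0 < r u) (ha : V a = r a)
    (hW : ∀ u ∈ Ioo a b, 0 ≤ r u * deriv V u - deriv r u * V u) :
    ∀ u ∈ Icc a b, r u ≤ V u := by
  have hderiv : ∀ u ∈ Icc a b, HasDerivAt (fun s => V s / r s)
      ((deriv V u * r u - V u * deriv r u) / r u ^ 2) u := fun u hu =>
    (hV u hu).hasDerivAt.div (hr u hu).hasDerivAt (hrpos u hu).ne'
  have hmono : MonotoneOn (fun s => V s / r s) (Icc a b) := by
    refine monotoneOn_of_hasDerivWithinAt_nonneg (convex_Icc a b)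
      (fun u hu => (hderiv u hu).continuousAt.continuousWithinAt)
      (fun u hu => (hderiv u (interior_subset hu)).hasDerivWithinAt) fun u hu => ?_
    rw [interior_Icc] at hu
    exact div_nonneg (by linarith [hW u hu]) (sq_nonneg _)
  intro u hu
  have hau : V a / r a ≤ V u / r u := hmono ⟨le_rfl, hu.1.trans hu.2⟩ hu hu.1
  rwa [ha, div_self (hrpos a ⟨le_rfl, hu.1.trans hu.2⟩).ne', one_le_div (hrpos u hu)] at hau

/-- Along a solution of `V₁' = a V₁ + b V₂` this is the Wronskian `r V₁' - r' V₁`. -/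
noncomputable def growthWronskian (r a b V₁ V₂ : ℝ → ℝ) (t : ℝ) : ℝ :=
  r t * (a t * V₁ t + b t * V₂ t) - deriv r t * V₁ t

/-- `r` times the gap in the instability condition
`det A < b (a / b)' + (r' / r) (tr A + b' / b) - r'' / r` for the system matrix
`A = !![a, b; c, d]`. -/
noncomputable def instabilityMargin (r a b c d : ℝ → ℝ) (t : ℝ) : ℝ :=
  r t * (b t * deriv (fun s => a s / b s) t - (a t * d t - b t * c t))
    + deriv r t * (a t + d t + deriv b t / b t) - deriv (deriv r) t

theorem hasDerivAt_growthWronskian {r a b c d V₁ V₂ : ℝ → ℝ} {t : ℝ}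
    (hr : DifferentiableAt ℝ r t) (hr' : DifferentiableAt ℝ (deriv r) t)
    (ha : DifferentiableAt ℝ a t) (hb : DifferentiableAt ℝ b t) (hbt : b t ≠ 0)
    (hV₁ : DifferentiableAt ℝ V₁ t) (hV₂ : DifferentiableAt ℝ V₂ t)
    (hV₁' : deriv V₁ t = a t * V₁ t + b t * V₂ t)
    (hV₂' : deriv V₂ t = c t * V₁ t + d t * V₂ t) :
    HasDerivAt (growthWronskian r a b V₁ V₂)
      ((a t + d t + deriv b t / b t) * growthWronskian r a b V₁ V₂ t
        + instabilityMargin r a b c d t * V₁ t) t := by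
  have hquot : deriv (fun s => a s / b s) t = (deriv a t * b t - a t * deriv b t) / b t ^ 2 :=
    (ha.hasDerivAt.div hb.hasDerivAt hbt).deriv
  have hW : HasDerivAt (growthWronskian r a b V₁ V₂) _ t :=
    (hr.hasDerivAt.mul ((ha.hasDerivAt.mul hV₁.hasDerivAt).add
      (hb.hasDerivAt.mul hV₂.hasDerivAt))).sub (hr'.hasDerivAt.mul hV₁.hasDerivAt)
  refine hW.congr_deriv ?_
  simp only [growthWronskian, instabilityMargin, hquot, hV₁', hV₂', Pi.add_apply, Pi.mul_apply]
  field_simp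
  ring

theorem le_of_instabilityMargin_pos {r a b c d V₁ V₂ : ℝ → ℝ} {t₀ T : ℝ}
    (hr : ∀ t ∈ Icc t₀ T, DifferentiableAt ℝ r t)
    (hr' : ∀ t ∈ Icc t₀ T, DifferentiableAt ℝ (deriv r) t) (hrpos : ∀ t ∈ Icc t₀ T, 0 < r t)
    (ha : ∀ t ∈ Icc t₀ T, DifferentiableAt ℝ a t) (hb : ∀ t ∈ Icc t₀ T, DifferentiableAt ℝ b t)
    (hbne : ∀ t ∈ Icc t₀ T, b t ≠ 0) (hK : ∀ t ∈ Icc t₀ T, 0 < instabilityMargin r a b c d t)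
    (hV₁ : ∀ t ∈ Icc t₀ T, DifferentiableAt ℝ V₁ t) (hV₂ : ∀ t ∈ Icc t₀ T, DifferentiableAt ℝ V₂ t)
    (hODE₁ : ∀ t ∈ Icc t₀ T, deriv V₁ t = a t * V₁ t + b t * V₂ t)
    (hODE₂ : ∀ t ∈ Icc t₀ T, deriv V₂ t = c t * V₁ t + d t * V₂ t)
    (hic : V₁ t₀ = r t₀) (hic' : a t₀ * r t₀ + b t₀ * V₂ t₀ = deriv r t₀) :
    ∀ t ∈ Icc t₀ T, r t ≤ V₁ t := by
  set W := growthWronskian r a b V₁ V₂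
  have hW : ∀ t ∈ Icc t₀ T, HasDerivAt W
      ((a t + d t + deriv b t / b t) * W t + instabilityMargin r a b c d t * V₁ t) t :=
    fun t ht => hasDerivAt_growthWronskian (hr t ht) (hr' t ht) (ha t ht) (hb t ht) (hbne t ht)
      (hV₁ t ht) (hV₂ t ht) (hODE₁ t ht) (hODE₂ t ht)
  have hW₀ : W t₀ = 0 := by
    simp only [W, growthWronskian]
    rw [hic, ← hic']
    ring
  have hle : ∀ x ∈ Icc t₀ T, (∀ u ∈ Icc t₀ x, 0 ≤ W u) → ∀ u ∈ Icc t₀ x, r u ≤ V₁ u := by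
    intro x hx hWx
    have hsub : Icc t₀ x ⊆ Icc t₀ T := Icc_subset_Icc_right hx.2
    refine le_of_wronskian_nonneg_s16 (fun u hu => hr u (hsub hu)) (fun u hu => hV₁ u (hsub hu))
      (fun u hu => hrpos u (hsub hu)) hic fun u hu => ?_
    have hu := Ioo_subset_Icc_self hu
    simpa only [W, growthWronskian, ← hODE₁ u (hsub hu)] using hWx u hu
  have hWnonneg : ∀ t ∈ Icc t₀ T, 0 ≤ W t := by
    refine nonneg_of_hasDerivWithinAt_pos_of_eq_zero
      (fun t ht => (hW t ht).continuousAt.continuousWithinAt)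
      (fun t ht => (hW t (Ico_subset_Icc_self ht)).hasDerivWithinAt) hW₀.ge
      fun x hx hWx hWx0 => ?_
    have hx := Ico_subset_Icc_self hx
    have hV₁x : 0 < V₁ x := (hrpos x hx).trans_le (hle x hx hWx x ⟨hx.1, le_rfl⟩)
    rw [hWx0, mul_zero, zero_add]
    exact mul_pos (hK x hx) hV₁x
  exact fun t ht => hle t ht (fun u hu => hWnonneg u (Icc_subset_Icc_right ht.2 hu)) t
    ⟨ht.1, le_rfl⟩

theorem turing_instability_evolving_interval_general
    (t₀ T : ℝ)
    (d₁ d₂ : ℝ)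
    (k : ℕ)
    (r J₁₁ J₁₂ J₂₁ J₂₂ V₁ V₂ : ℝ → ℝ)
    (hr : ContDiff ℝ 2 r)
    (hrpos : ∀ t ∈ Icc t₀ T, 0 < r t)
    (hJ₁₁d : ∀ t ∈ Icc t₀ T, DifferentiableAt ℝ J₁₁ t)
    (hJ₁₂d : ∀ t ∈ Icc t₀ T, DifferentiableAt ℝ J₁₂ t)
    (hJ₁₂ne : ∀ t ∈ Icc t₀ T, J₁₂ t ≠ 0)
    (hineq : ∀ t ∈ Icc t₀ T,
      J₁₁ t * J₂₂ t - J₁₂ t * J₂₁ t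
          - (d₂ * J₁₁ t + d₁ * J₂₂ t) * (π ^ 2 * (k : ℝ) ^ 2 / (r t) ^ 2)
          + d₁ * d₂ * (π ^ 4 * (k : ℝ) ^ 4 / (r t) ^ 4)
        < -(deriv (deriv r) t) / r t
          - (deriv r t / r t)
            * ((d₁ + d₂) * (π ^ 2 * (k : ℝ) ^ 2 / (r t) ^ 2)
                - (J₁₁ t + J₂₂ t) - deriv J₁₂ t / J₁₂ t)
          - J₁₂ t * deriv
              (fun s => (d₁ * π ^ 2 * (k : ℝ) ^ 2 / (r s) ^ 2 - J₁₁ s) / J₁₂ s) t)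
    (hV₁d : ∀ t ∈ Icc t₀ T, DifferentiableAt ℝ V₁ t)
    (hV₂d : ∀ t ∈ Icc t₀ T, DifferentiableAt ℝ V₂ t)
    (hODE₁ : ∀ t ∈ Icc t₀ T,
      deriv V₁ t = -(d₁ * (π ^ 2 * (k : ℝ) ^ 2 / (r t) ^ 2)) * V₁ t
        + J₁₁ t * V₁ t + J₁₂ t * V₂ t)
    (hODE₂ : ∀ t ∈ Icc t₀ T,
      deriv V₂ t = -(d₂ * (π ^ 2 * (k : ℝ) ^ 2 / (r t) ^ 2)) * V₂ t
        + J₂₁ t * V₁ t + J₂₂ t * V₂ t)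
    (hic : V₁ t₀ = r t₀)
    (hic' : -(d₁ * (π ^ 2 * (k : ℝ) ^ 2 / (r t₀) ^ 2)) * r t₀
        + J₁₁ t₀ * r t₀ + J₁₂ t₀ * V₂ t₀ = deriv r t₀) :
    ∀ t ∈ Icc t₀ T, r t ≤ V₁ t := by
  set a : ℝ → ℝ := fun s => -(d₁ * (π ^ 2 * (k : ℝ) ^ 2 / (r s) ^ 2)) + J₁₁ s
  set d : ℝ → ℝ := fun s => -(d₂ * (π ^ 2 * (k : ℝ) ^ 2 / (r s) ^ 2)) + J₂₂ s
  have hrd : Differentiable ℝ r := hr.differentiable two_ne_zero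
  have hmargin : ∀ t ∈ Icc t₀ T, 0 < instabilityMargin r a J₁₂ J₂₁ d t := by
    intro t ht
    have hrt := (hrpos t ht).ne'
    have hJt := hJ₁₂ne t ht
    have hquot : (fun s => a s / J₁₂ s)
        = fun s => -((d₁ * π ^ 2 * (k : ℝ) ^ 2 / (r s) ^ 2 - J₁₁ s) / J₁₂ s) := by
      funext s
      ring
    refine (mul_pos (hrpos t ht) (sub_pos.2 (hineq t ht))).trans_eq ?_
    rw [instabilityMargin, hquot, deriv.fun_neg]
    simp only [a, d]
    field_simp
    ring
  refine le_of_instabilityMargin_pos (fun t _ => hrd t) (fun t _ => hr.differentiable_deriv_two t)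
    hrpos (fun t ht => ?_) hJ₁₂d hJ₁₂ne hmargin hV₁d hV₂d
    (fun t ht => by rw [hODE₁ t ht]; ring) (fun t ht => by rw [hODE₂ t ht]; ring) hic
    (by rw [← hic']; ring)
  have hJ₁₁t := hJ₁₁d t ht
  fun_prop (disch := exact pow_ne_zero 2 (hrpos t ht).ne')

/-- Instantiation of Theorem 3 (first branch) on an isotropically evolving line
segment `Ω(t) = [0, r(t)]`: with eigenvalues `ρ_k(t) = π²k²/r(t)²` and volume
factor `μ(t) = r(t)`, the differential inequality forces the component `V₁` of
the linearized perturbation of the k-th mode to grow at least as fast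
as `r(t)`. -/
theorem turing_instability_evolving_interval
    (t₀ T : ℝ) (ht : t₀ < T)
    (d₁ d₂ : ℝ) (hd₁ : 0 < d₁) (hd₂ : 0 < d₂)
    (k : ℕ) (hk : 1 ≤ k)
    (r J₁₁ J₁₂ J₂₁ J₂₂ V₁ V₂ : ℝ → ℝ)
    (hr : ContDiff ℝ 2 r)
    (hrpos : ∀ t ∈ Icc t₀ T, 0 < r t)
    (hJ₁₁d : ∀ t ∈ Icc t₀ T, DifferentiableAt ℝ J₁₁ t)
    (hJ₁₁c : ContinuousOn (deriv J₁₁) (Icc t₀ T))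
    (hJ₁₂d : ∀ t ∈ Icc t₀ T, DifferentiableAt ℝ J₁₂ t)
    (hJ₁₂c : ContinuousOn (deriv J₁₂) (Icc t₀ T))
    (hJ₂₁d : ∀ t ∈ Icc t₀ T, DifferentiableAt ℝ J₂₁ t)
    (hJ₂₁c : ContinuousOn (deriv J₂₁) (Icc t₀ T))
    (hJ₂₂d : ∀ t ∈ Icc t₀ T, DifferentiableAt ℝ J₂₂ t)
    (hJ₂₂c : ContinuousOn (deriv J₂₂) (Icc t₀ T))
    (hJ₁₂ne : ∀ t ∈ Icc t₀ T, J₁₂ t ≠ 0)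
    (hineq : ∀ t ∈ Icc t₀ T,
      J₁₁ t * J₂₂ t - J₁₂ t * J₂₁ t
          - (d₂ * J₁₁ t + d₁ * J₂₂ t) * (π ^ 2 * (k : ℝ) ^ 2 / (r t) ^ 2)
          + d₁ * d₂ * (π ^ 4 * (k : ℝ) ^ 4 / (r t) ^ 4)
        < -(deriv (deriv r) t) / r t
          - (deriv r t / r t)
            * ((d₁ + d₂) * (π ^ 2 * (k : ℝ) ^ 2 / (r t) ^ 2)
                - (J₁₁ t + J₂₂ t) - deriv J₁₂ t / J₁₂ t)
          - J₁₂ t * deriv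
              (fun s => (d₁ * π ^ 2 * (k : ℝ) ^ 2 / (r s) ^ 2 - J₁₁ s) / J₁₂ s) t)
    (hV₁d : ∀ t ∈ Icc t₀ T, DifferentiableAt ℝ V₁ t)
    (hV₂d : ∀ t ∈ Icc t₀ T, DifferentiableAt ℝ V₂ t)
    (hODE₁ : ∀ t ∈ Icc t₀ T,
      deriv V₁ t = -(d₁ * (π ^ 2 * (k : ℝ) ^ 2 / (r t) ^ 2)) * V₁ t
        + J₁₁ t * V₁ t + J₁₂ t * V₂ t)
    (hODE₂ : ∀ t ∈ Icc t₀ T,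
      deriv V₂ t = -(d₂ * (π ^ 2 * (k : ℝ) ^ 2 / (r t) ^ 2)) * V₂ t
        + J₂₁ t * V₁ t + J₂₂ t * V₂ t)
    (hic : V₁ t₀ = r t₀)
    (hic' : -(d₁ * (π ^ 2 * (k : ℝ) ^ 2 / (r t₀) ^ 2)) * r t₀
        + J₁₁ t₀ * r t₀ + J₁₂ t₀ * V₂ t₀ = deriv r t₀) :
    ∀ t ∈ Icc t₀ T, r t ≤ V₁ t :=
  turing_instability_evolving_interval_general t₀ T d₁ d₂ k r J₁₁ J₁₂ J₂₁ J₂₂ V₁ V₂ hr hrpos hJ₁₁d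
    hJ₁₂d hJ₁₂ne hineq hV₁d hV₂d hODE₁ hODE₂ hic hic'
end
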